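/- Let c ∈ (−√2, √2) and κ > 0. There exists a constant C > 0, depending only on c and κ, such that for every continuously differentiable, bounded function w : ℝ → ℝ with ∫_ℝ (w')² < ∞ and satisfying the orthogonality condition ∫_ℝ w·Q_c² = 0, one has ∫_ℝ w(x)²·ρ(x)^κ dx ≤ C·∫_ℝ (w'(x))² dx, where ρ(x) = sech(x). -/

import Mathlib

open Real MeasureTheory

/-- The soliton profile `Q_c(x) = (β²/2) sech²(βx/2)` with `β = √(2 - c²)`. -/
noncomputable def Q (c x : ℝ) : ℝ :=
  (Real.sqrt (2 - c ^ 2)) ^ 2 / 2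
    * ((Real.cosh (Real.sqrt (2 - c ^ 2) * x / 2))⁻¹) ^ 2

/-- The weight `ρ(x) = sech x`. -/
noncomputable def rho (x : ℝ) : ℝ := (Real.cosh x)⁻¹

/-!
Cauchy–Schwarz gives `(w x - w 0)² ≤ |x| ∫ (w')²`, so `w` stays within `√D (1 + |x|) / 2` of
`w 0`, where `D = ∫ (w')²`. Integrating this deviation against `Q_c²` and using the
orthogonality bounds `|w 0|` by a multiple of `√D`; then `w² ≤ 2 w(0)² + 2 (w - w 0)²`
integrated against `ρ^κ` bounds `∫ w² ρ^κ` by a multiple of `D`. All weights are integrable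
against polynomials in `|x|` because `sech` decays exponentially.
-/

open Set
open scoped Interval

-- Cauchy–Schwarz, from the nonnegative discriminant of `y ↦ ∫ (g - y)²`.
lemma sq_integral_le_measureReal_univ_mul_integral_sq {α : Type*} [MeasurableSpace α]
    {μ : Measure α} [IsFiniteMeasure μ] {g : α → ℝ} (hg : Integrable g μ)
    (hg2 : Integrable (fun a => g a ^ 2) μ) :
    (∫ a, g a ∂μ) ^ 2 ≤ μ.real univ * ∫ a, g a ^ 2 ∂μ := by
  have hquad : ∀ y : ℝ,
      0 ≤ μ.real univ * (y * y) + (-2 * ∫ a, g a ∂μ) * y + ∫ a, g a ^ 2 ∂μ := by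
    intro y
    have hexpand : ∫ a, (g a - y) ^ 2 ∂μ
        = μ.real univ * (y * y) + (-2 * ∫ a, g a ∂μ) * y + ∫ a, g a ^ 2 ∂μ := by
      have : (fun a => (g a - y) ^ 2) = fun a => g a ^ 2 + (-2 * y) * g a + y ^ 2 := by
        funext a; ring
      rw [this, integral_add (by fun_prop) (by fun_prop), integral_add hg2 (hg.const_mul _),
        integral_const_mul, integral_const, smul_eq_mul]
      ring
    exact hexpand ▸ integral_nonneg fun a => sq_nonneg _
  have := discrim_le_zero hquad
  rw [discrim] at this
  linarith

lemma sq_sub_le_abs_mul_integral_deriv_sq {w : ℝ → ℝ} (hw : ContDiff ℝ 1 w)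
    (hD : Integrable fun x => deriv w x ^ 2) (x : ℝ) :
    (w x - w 0) ^ 2 ≤ |x| * ∫ t, deriv w t ^ 2 := by
  have hw' : Continuous (deriv w) := hw.continuous_deriv le_rfl
  have ftc : ∫ t in (0 : ℝ)..x, deriv w t = w x - w 0 :=
    intervalIntegral.integral_deriv_eq_sub
      (fun t _ => (hw.differentiable one_ne_zero).differentiableAt) (hw'.intervalIntegrable 0 x)
  have hsq_int : IntegrableOn (fun t => deriv w t ^ 2) (Ι 0 x) := hD.integrableOn
  calc (w x - w 0) ^ 2 = (∫ t in Ι 0 x, deriv w t) ^ 2 := by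
        rw [← ftc, intervalIntegral.intervalIntegral_eq_integral_uIoc]
        split_ifs <;> simp
    _ ≤ volume.real (Ι 0 x) * ∫ t in Ι 0 x, deriv w t ^ 2 := by
        have : IsFiniteMeasure (volume.restrict (Ι (0 : ℝ) x)) := by
          rw [isFiniteMeasure_restrict, Real.volume_uIoc]; exact ENNReal.ofReal_ne_top
        simpa only [measureReal_restrict_apply_univ] using
          sq_integral_le_measureReal_univ_mul_integral_sq
            (hw'.integrableOn_uIoc (a := 0) (b := x)) hsq_int
    _ ≤ |x| * ∫ t, deriv w t ^ 2 := by
        rw [measureReal_def, Real.volume_uIoc, sub_zero, ENNReal.toReal_ofReal (abs_nonneg x)]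
        exact mul_le_mul_of_nonneg_left
          (setIntegral_le_integral hD (.of_forall fun t => sq_nonneg _)) (abs_nonneg x)

lemma abs_sub_le_sqrt_integral_deriv_sq_mul {w : ℝ → ℝ} (hw : ContDiff ℝ 1 w)
    (hD : Integrable fun x => deriv w x ^ 2) (x : ℝ) :
    |w x - w 0| ≤ √(∫ t, deriv w t ^ 2) / 2 * (1 + |x|) := by
  have hD0 : 0 ≤ ∫ t, deriv w t ^ 2 := integral_nonneg fun t => sq_nonneg _
  refine abs_le_of_sq_le_sq ?_ (by positivity)
  calc (w x - w 0) ^ 2 ≤ |x| * ∫ t, deriv w t ^ 2 := sq_sub_le_abs_mul_integral_deriv_sq hw hD x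
    _ ≤ ((1 + |x|) / 2) ^ 2 * ∫ t, deriv w t ^ 2 := by
        gcongr
        nlinarith [sq_nonneg (1 - |x|)]
    _ = (√(∫ t, deriv w t ^ 2) / 2 * (1 + |x|)) ^ 2 := by
        rw [mul_pow, div_pow, div_pow, sq_sqrt hD0]; ring

section WeightedPoincare

variable {w q r : ℝ → ℝ} {a : ℝ}

lemma abs_mul_integral_le_of_integral_mul_eq_zero (hw : AEStronglyMeasurable w)
    (hq : AEStronglyMeasurable q) (hq0 : ∀ x, 0 ≤ q x)
    (hq_int : Integrable fun x => (1 + |x|) * q x)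
    (hwa : ∀ x, |w x - w 0| ≤ a * (1 + |x|)) (horth : ∫ x, w x * q x = 0) :
    |w 0| * ∫ x, q x ≤ a * ∫ x, (1 + |x|) * q x := by
  have hq_int' : Integrable q := hq_int.mono' hq (.of_forall fun x => by
    rw [Real.norm_eq_abs, abs_of_nonneg (hq0 x)]
    nlinarith [abs_nonneg x, hq0 x])
  have hdiff_int : Integrable fun x => (w x - w 0) * q x :=
    (hq_int.const_mul a).mono' ((hw.sub aestronglyMeasurable_const).mul hq) (.of_forall fun x => by
      rw [Real.norm_eq_abs, abs_mul, abs_of_nonneg (hq0 x), ← mul_assoc]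
      exact mul_le_mul_of_nonneg_right (hwa x) (hq0 x))
  have hsplit : ∫ x, (w x - w 0) * q x = -(w 0 * ∫ x, q x) := by
    have hwq : Integrable fun x => w x * q x :=
      (hdiff_int.add (hq_int'.const_mul (w 0))).congr
        (.of_forall fun x => by simp only [Pi.add_apply]; ring)
    simp_rw [sub_mul]
    rw [integral_sub hwq (hq_int'.const_mul _), horth, integral_const_mul, zero_sub]
  calc |w 0| * ∫ x, q x = |∫ x, (w x - w 0) * q x| := by
        rw [hsplit, abs_neg, abs_mul, abs_of_nonneg (integral_nonneg hq0)]
    _ ≤ ∫ x, |(w x - w 0) * q x| := abs_integral_le_integral_abs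
    _ ≤ ∫ x, a * ((1 + |x|) * q x) := by
        refine integral_mono hdiff_int.abs (hq_int.const_mul a) fun x => ?_
        rw [abs_mul, abs_of_nonneg (hq0 x), ← mul_assoc]
        exact mul_le_mul_of_nonneg_right (hwa x) (hq0 x)
    _ = a * ∫ x, (1 + |x|) * q x := integral_const_mul _ _

lemma integral_sq_mul_le_of_abs_sub_le (hr0 : ∀ x, 0 ≤ r x)
    (hr_int : Integrable fun x => (1 + |x|) ^ 2 * r x) (hwa : ∀ x, |w x - w 0| ≤ a * (1 + |x|)) :
    ∫ x, w x ^ 2 * r x ≤ (2 * w 0 ^ 2 + 2 * a ^ 2) * ∫ x, (1 + |x|) ^ 2 * r x := by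
  have hpt : ∀ x, w x ^ 2 * r x ≤ (2 * w 0 ^ 2 + 2 * a ^ 2) * ((1 + |x|) ^ 2 * r x) := by
    intro x
    have hone : 1 ≤ (1 + |x|) ^ 2 := one_le_pow₀ (by linarith [abs_nonneg x])
    have hdiff : (w x - w 0) ^ 2 ≤ (a * (1 + |x|)) ^ 2 :=
      sq_le_sq' (abs_le.1 (hwa x)).1 (abs_le.1 (hwa x)).2
    have hsq : w x ^ 2 ≤ (2 * w 0 ^ 2 + 2 * a ^ 2) * (1 + |x|) ^ 2 := by
      nlinarith [sq_nonneg (w x - 2 * w 0), sq_nonneg (w 0)]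
    rw [← mul_assoc]
    exact mul_le_mul_of_nonneg_right hsq (hr0 x)
  rw [← integral_const_mul]
  exact integral_mono_of_nonneg (.of_forall fun x => mul_nonneg (sq_nonneg _) (hr0 x))
    (hr_int.const_mul _) (.of_forall hpt)

theorem exists_integral_sq_mul_le_of_integral_mul_eq_zero (hq : AEStronglyMeasurable q)
    (hq0 : ∀ x, 0 ≤ q x) (hq_pos : 0 < ∫ x, q x) (hq_int : Integrable fun x => (1 + |x|) * q x)
    (hr0 : ∀ x, 0 ≤ r x) (hr_int : Integrable fun x => (1 + |x|) ^ 2 * r x) :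
    ∃ C > 0, ∀ w : ℝ → ℝ, ContDiff ℝ 1 w → Integrable (fun x => deriv w x ^ 2) →
      ∫ x, w x * q x = 0 → ∫ x, w x ^ 2 * r x ≤ C * ∫ x, deriv w x ^ 2 := by
  set I₀ := ∫ x, q x
  set I₁ := ∫ x, (1 + |x|) * q x
  set J := ∫ x, (1 + |x|) ^ 2 * r x
  have hI₁ : 0 ≤ I₁ := integral_nonneg fun x => mul_nonneg (by positivity) (hq0 x)
  have hJ : 0 ≤ J := integral_nonneg fun x => mul_nonneg (by positivity) (hr0 x)
  refine ⟨(I₁ ^ 2 / (2 * I₀ ^ 2) + 1 / 2) * J + 1, by positivity, fun w hw hD horth => ?_⟩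
  set D := ∫ x, deriv w x ^ 2
  have hD0 : 0 ≤ D := integral_nonneg fun x => sq_nonneg _
  have hwa := abs_sub_le_sqrt_integral_deriv_sq_mul hw hD
  have hw0 : |w 0| * I₀ ≤ √D / 2 * I₁ :=
    abs_mul_integral_le_of_integral_mul_eq_zero hw.continuous.aestronglyMeasurable hq hq0 hq_int
      hwa horth
  have hw0sq : 2 * w 0 ^ 2 ≤ I₁ ^ 2 / (2 * I₀ ^ 2) * D := by
    have := pow_le_pow_left₀ (by positivity) hw0 2
    rw [mul_pow, mul_pow, div_pow, sq_abs, sq_sqrt hD0] at this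
    rw [div_mul_eq_mul_div, le_div_iff₀ (by positivity)]
    nlinarith
  calc ∫ x, w x ^ 2 * r x ≤ (2 * w 0 ^ 2 + 2 * (√D / 2) ^ 2) * J :=
        integral_sq_mul_le_of_abs_sub_le hr0 hr_int hwa
    _ ≤ ((I₁ ^ 2 / (2 * I₀ ^ 2) + 1 / 2) * J + 1) * D := by
        rw [div_pow, sq_sqrt hD0]
        nlinarith [mul_le_mul_of_nonneg_right hw0sq hJ]

end WeightedPoincare

lemma integrable_one_add_abs_pow_mul_exp_neg_mul_abs (n : ℕ) {b : ℝ} (hb : 0 < b) :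
    Integrable fun x : ℝ => (1 + |x|) ^ n * exp (-(b * |x|)) := by
  refine ((integrable_one_add_norm (E := ℝ) (μ := volume) (r := 2) (by norm_num)).const_mul
    ((n + 2).factorial * exp b / b ^ (n + 2))).mono' (by fun_prop) (.of_forall fun x => ?_)
  have hu : 0 < 1 + |x| := by positivity
  -- `(b u)^(n+2) / (n+2)! ≤ exp (b u)` trades the exponential decay for `u⁻²`
  have hexp : (b * (1 + |x|)) ^ (n + 2) / (n + 2).factorial ≤ exp (b * (1 + |x|)) :=
    pow_div_factorial_le_exp _ (by positivity) _
  have hsplit : exp (-(b * |x|)) = exp b / exp (b * (1 + |x|)) := by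
    rw [← exp_sub]; ring_nf
  rw [Real.norm_eq_abs, abs_of_nonneg (by positivity), Real.norm_eq_abs, rpow_neg hu.le,
    rpow_two, hsplit]
  rw [div_le_iff₀ (by positivity)] at hexp
  field_simp
  rwa [← pow_add, add_comm 2 n, ← mul_pow, mul_comm (1 + |x|) b]

lemma integrable_one_add_abs_pow_mul_of_abs_le_exp (n : ℕ) {f : ℝ → ℝ}
    (hf : AEStronglyMeasurable f) {A b : ℝ} (hb : 0 < b)
    (hfb : ∀ x, |f x| ≤ A * exp (-(b * |x|))) :
    Integrable fun x => (1 + |x|) ^ n * f x := by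
  refine ((integrable_one_add_abs_pow_mul_exp_neg_mul_abs n hb).const_mul A).mono'
    ((by fun_prop : Continuous fun x : ℝ => (1 + |x|) ^ n).aestronglyMeasurable.mul hf)
    (.of_forall fun x => ?_)
  rw [Real.norm_eq_abs, abs_mul, abs_of_nonneg (by positivity), mul_left_comm]
  exact mul_le_mul_of_nonneg_left (hfb x) (by positivity)

lemma inv_cosh_le_two_mul_exp_neg_abs (x : ℝ) : (cosh x)⁻¹ ≤ 2 * exp (-|x|) := by
  have hcosh : exp |x| / 2 ≤ cosh x := by
    rw [← cosh_abs, cosh_eq]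
    linarith [exp_pos (-|x|)]
  calc (cosh x)⁻¹ ≤ (exp |x| / 2)⁻¹ := inv_anti₀ (by positivity) hcosh
    _ = 2 * exp (-|x|) := by rw [exp_neg, inv_div, div_eq_mul_inv]

lemma inv_cosh_rpow_le {κ : ℝ} (hκ : 0 ≤ κ) (x : ℝ) :
    (cosh x)⁻¹ ^ κ ≤ 2 ^ κ * exp (-(κ * |x|)) :=
  calc (cosh x)⁻¹ ^ κ ≤ (2 * exp (-|x|)) ^ κ :=
        rpow_le_rpow (inv_pos.2 (cosh_pos x)).le (inv_cosh_le_two_mul_exp_neg_abs x) hκ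
    _ = 2 ^ κ * exp (-(κ * |x|)) := by
        rw [mul_rpow zero_le_two (exp_pos _).le, ← exp_mul]; ring_nf

lemma Q_pos {c : ℝ} (hc : c ^ 2 < 2) (x : ℝ) : 0 < Q c x := by
  have : 0 < √(2 - c ^ 2) := sqrt_pos.2 (by linarith)
  unfold Q
  positivity

lemma sq_Q_le (c x : ℝ) :
    Q c x ^ 2 ≤ 4 * √(2 - c ^ 2) ^ 4 * exp (-(2 * √(2 - c ^ 2) * |x|)) := by
  set β := √(2 - c ^ 2)
  have hβ : 0 ≤ β := sqrt_nonneg _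
  have hsech := inv_cosh_rpow_le (by norm_num : (0 : ℝ) ≤ 4) (β * x / 2)
  simp only [rpow_ofNat] at hsech
  calc Q c x ^ 2 = (β ^ 2 / 2) ^ 2 * (cosh (β * x / 2))⁻¹ ^ 4 := by unfold Q; ring
    _ ≤ (β ^ 2 / 2) ^ 2 * (2 ^ 4 * exp (-(4 * |β * x / 2|))) := by gcongr
    _ = 4 * β ^ 4 * exp (-(2 * β * |x|)) := by
        rw [abs_div, abs_mul, abs_of_nonneg hβ, abs_two]; ring_nf

lemma integrable_one_add_abs_pow_mul_sq_Q {c : ℝ} (hc : c ^ 2 < 2) (n : ℕ) :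
    Integrable fun x => (1 + |x|) ^ n * Q c x ^ 2 :=
  integrable_one_add_abs_pow_mul_of_abs_le_exp n (by unfold Q; fun_prop)
    (by have := sqrt_pos.2 (sub_pos.2 hc); positivity)
    fun x => (abs_of_nonneg (sq_nonneg _)).trans_le (sq_Q_le c x)

lemma integral_sq_Q_pos {c : ℝ} (hc : c ^ 2 < 2) : 0 < ∫ x, Q c x ^ 2 := by
  have hsupp : Function.support (fun x => Q c x ^ 2) = univ :=
    eq_univ_of_forall fun x => (pow_pos (Q_pos hc x) 2).ne'
  rw [integral_pos_iff_support_of_nonneg (fun x => sq_nonneg _)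
    (by simpa using integrable_one_add_abs_pow_mul_sq_Q hc 0), hsupp]
  simp

lemma integrable_one_add_abs_pow_mul_rho_rpow {κ : ℝ} (hκ : 0 < κ) (n : ℕ) :
    Integrable fun x => (1 + |x|) ^ n * rho x ^ κ :=
  integrable_one_add_abs_pow_mul_of_abs_le_exp n
    (by unfold rho; fun_prop : Measurable fun x => rho x ^ κ).aestronglyMeasurable hκ
    fun x => (abs_of_nonneg (by unfold rho; positivity)).trans_le (inv_cosh_rpow_le hκ.le x)

/-- Poincaré-type inequality: if `∫ w Q_c² = 0` then
`∫ w² ρ^κ ≲ ∫ (w')²`. -/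
theorem poincare_orthogonal (c : ℝ)
    (hc : c ∈ Set.Ioo (-Real.sqrt 2) (Real.sqrt 2)) (κ : ℝ) (hκ : 0 < κ) :
    ∃ C > 0, ∀ w : ℝ → ℝ, ContDiff ℝ 1 w → (∃ M, ∀ x, |w x| ≤ M) →
      Integrable (fun x => (deriv w x) ^ 2) →
      (∫ x, w x * (Q c x) ^ 2) = 0 →
      (∫ x, w x ^ 2 * rho x ^ κ) ≤ C * ∫ x, (deriv w x) ^ 2 := by
  have hc2 : c ^ 2 < 2 := by simpa [sq_sqrt zero_le_two] using sq_lt_sq' hc.1 hc.2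
  obtain ⟨C, hC, hpoincare⟩ := exists_integral_sq_mul_le_of_integral_mul_eq_zero
    (by unfold Q; fun_prop) (fun x => sq_nonneg (Q c x)) (integral_sq_Q_pos hc2)
    (by simpa using integrable_one_add_abs_pow_mul_sq_Q hc2 1)
    (fun x => by unfold rho; positivity) (integrable_one_add_abs_pow_mul_rho_rpow hκ 2)
  exact ⟨C, hC, fun w hw _ => hpoincare w hw⟩
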